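/- arXiv:2507.21699 — 3 statements merged into one kernel-verified Lean document; each statement's English description precedes it below -/
import Mathlib

section
/- Fix u ≥ 0, t = (1+u)⁻¹, d ∈ [0,1], and r ≥ t. With π, π̂, π̃ as defined (π(q,r) = q(1+u)−1 for q ≥ t, = d(q(1+u)−1) for q < t; π̂(q) = max(0, q(1+u)−1); π̃(q) = (π(q,r) − π(r,r)) − (π̂(q) − π̂(r))), for every probability measure μ on [0,1] with mean r we have ∫ π̃(q) dμ(q) ≤ 0. -/
open MeasureTheory Set

/-- For r ≥ t, ∫ π̃ dμ ≤ 0 for any probability measure μ on [0,1] with mean r: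
a member who would not acquire information as a dictator at belief r has no
incentive to acquire information under any voting mechanism. -/
theorem stmt3 (u : ℝ) (hu : 0 ≤ u) (t : ℝ) (ht : t = (1 + u)⁻¹)
    (d : ℝ) (hd : d ∈ Set.Icc (0:ℝ) 1)
    (r : ℝ) (hr : r ∈ Set.Icc (0:ℝ) 1) (hrt : t ≤ r)
    (π : ℝ → ℝ → ℝ)
    (hπ : ∀ q r', π q r' = if t ≤ q then q * (1 + u) - 1 else d * (q * (1 + u) - 1))
    (πhat : ℝ → ℝ) (hπhat : ∀ q, πhat q = max 0 (q * (1 + u) - 1))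
    (πtilde : ℝ → ℝ)
    (hπtilde : ∀ q, πtilde q = (π q r - π r r) - (πhat q - πhat r))
    (μ : Measure ℝ) [IsProbabilityMeasure μ]
    (hsupp : μ (Set.Icc (0:ℝ) 1)ᶜ = 0)
    (hmean : ∫ q, q ∂μ = r)
    (hint : Integrable πtilde μ) :
    ∫ q, πtilde q ∂μ ≤ 0 := by
  have hpos : (0:ℝ) < 1 + u := by linarith
  apply integral_nonpos
  intro q
  simp only [Pi.zero_apply]
  rw [hπtilde q, hπ q r, hπ r r, hπhat q, hπhat r, if_pos hrt]
  have hrmax : max 0 (r * (1 + u) - 1) = r * (1 + u) - 1 := by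
    have : 1 ≤ r * (1 + u) := by
      rw [ht] at hrt
      calc (1:ℝ) = (1+u)⁻¹ * (1+u) := by field_simp
      _ ≤ r * (1 + u) := by nlinarith
    exact max_eq_right (by linarith)
  rw [hrmax]
  by_cases hq : t ≤ q
  · rw [if_pos hq]
    have : max 0 (q * (1 + u) - 1) = q * (1 + u) - 1 := by
      have : 1 ≤ q * (1 + u) := by
        rw [ht] at hq
        calc (1:ℝ) = (1+u)⁻¹ * (1+u) := by field_simp
        _ ≤ q * (1 + u) := by nlinarith
      exact max_eq_right (by linarith)
    rw [this]; ring_nf; linarith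
  · rw [if_neg hq]
    push_neg at hq
    have hlt : q * (1 + u) - 1 < 0 := by
      rw [ht] at hq
      have : q * (1+u) < (1+u)⁻¹ * (1+u) := by nlinarith
      rw [inv_mul_cancel₀ (by linarith)] at this
      linarith
    rw [max_eq_left (by linarith)]
    nlinarith [hd.1, hd.2]
end

section
/- Let 0 ≤ a < b ≤ 1, let ζ and ζ̂ be as above, and let p ∈ (0, b). Then the unique probability measure μ on [0,1] supported on {0, b} with mean p (putting mass p/b on b and 1 − p/b on 0) satisfies ∫ ζ dμ = ζ̂(p), and for every probability measure ν on [0,1] with mean p, ∫ ζ dν ≤ ζ̂(p). -/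
open MeasureTheory Set

/-- The lobbyist's optimal experiment under a dictatorship: the two-point measure
on {0, b} with mean p achieves the concavified value ζ̂(p), and no Bayes-plausible
distribution does better. -/
theorem stmt5 (a b : ℝ) (ha : 0 ≤ a) (hab : a < b) (hb : b ≤ 1)
    (p : ℝ) (hp : 0 < p) (hpb : p < b)
    (ζ ζhat : ℝ → ℝ)
    (hζ : ∀ r, ζ r = if r ≤ a then 0 else if r ≤ b then (r - a) / (b - a) else 1)
    (hζhat : ∀ r, ζhat r = if r ≤ b then r / b else 1)
    (μ : Measure ℝ)
    (hμ : μ = ENNReal.ofReal (p / b) • Measure.dirac b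
            + ENNReal.ofReal (1 - p / b) • Measure.dirac 0) :
    (∫ r, ζ r ∂μ = ζhat p) ∧
    (∀ ν : Measure ℝ, IsProbabilityMeasure ν → ν (Set.Icc (0:ℝ) 1)ᶜ = 0 →
      (∫ r, r ∂ν = p) → Integrable ζ ν → ∫ r, ζ r ∂ν ≤ ζhat p) := by
  have hb0 : (0:ℝ) < b := lt_trans hp hpb
  have hba : (0:ℝ) < b - a := by linarith
  have hζb : ζ b = 1 := by
    rw [hζ, if_neg (not_le.mpr hab), if_pos le_rfl]
    field_simp
  have hζ0 : ζ 0 = 0 := by rw [hζ, if_pos ha]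
  have hzp : ζhat p = p / b := by rw [hζhat, if_pos hpb.le]
  have hmeas : Measurable ζ := by
    have : ζ = fun r => if r ≤ a then 0 else if r ≤ b then (r - a) / (b - a) else 1 :=
      funext hζ
    rw [this]
    apply Measurable.ite (measurableSet_le measurable_id measurable_const) measurable_const
    exact Measurable.ite (measurableSet_le measurable_id measurable_const)
      (by measurability) measurable_const
  have hbd : ∀ r, ‖ζ r‖ ≤ 1 := by
    intro r
    rw [hζ r, Real.norm_eq_abs]
    split_ifs with h1 h2
    · simp
    · rw [abs_le]
      constructor
      · have : 0 ≤ (r - a) / (b - a) := by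
          apply div_nonneg (by linarith [not_le.mp h1]) hba.le
        linarith
      · rw [div_le_one hba]; linarith
    · simp
  have hint : ∀ (κ : Measure ℝ), IsFiniteMeasure κ → Integrable ζ κ := by
    intro κ hκ
    exact (integrable_const (1:ℝ)).mono' hmeas.aestronglyMeasurable
      (Filter.Eventually.of_forall hbd)
  constructor
  · rw [hμ]
    rw [integral_add_measure (hint _ ?_) (hint _ ?_)]
    · rw [integral_smul_measure, integral_smul_measure, integral_dirac, integral_dirac,
        hζb, hζ0, hzp, ENNReal.toReal_ofReal (by positivity)]
      simp
    · exact (Measure.dirac b).smul_finite (by simp)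
    · exact (Measure.dirac 0).smul_finite (by simp)
  · intro ν hν hsupp hmean hintν
    rw [hzp]
    have hae : ∀ᵐ r ∂ν, r ∈ Set.Icc (0:ℝ) 1 := by
      rw [MeasureTheory.ae_iff]
      exact hsupp
    have hintr : Integrable (fun r : ℝ => r / b) ν := by
      refine (integrable_const (1/b : ℝ)).mono' (measurable_id.div_const b).aestronglyMeasurable ?_
      filter_upwards [hae] with r hr
      rw [Real.norm_eq_abs, abs_div, abs_of_pos hb0, abs_of_nonneg hr.1, one_div,
          div_eq_mul_inv]
      calc r * b⁻¹ ≤ 1 * b⁻¹ := mul_le_mul_of_nonneg_right hr.2 (by positivity)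
        _ = b⁻¹ := one_mul _
    have hle : ∀ᵐ r ∂ν, ζ r ≤ r / b := by
      filter_upwards [hae] with r hr
      rw [hζ r]
      split_ifs with h1 h2
      · exact div_nonneg hr.1 hb0.le
      · rw [div_le_div_iff₀ hba hb0]
        nlinarith [not_le.mp h1]
      · rw [le_div_iff₀ hb0]
        nlinarith [not_le.mp h2]
    calc ∫ r, ζ r ∂ν ≤ ∫ r, r / b ∂ν := integral_mono_ae hintν hintr hle
      _ = p / b := by rw [integral_div, hmean]
end

section
/- Let p ∈ (0,1), q̂ ∈ (p,1], let μ̂ put mass p/q̂ on q̂ and 1 − p/q̂ on 0, and let g : [0,1] → [0,1] be any nondecreasing function with g(0) = 0 and g(r) = 1 for all r ≥ q̂. If (ξ₁, ξ₂) is a martingale with ξ₁ ~ μ̂ and ξ₂ ~ μ, then E[g(ξ₂)] ≤ E[g(ξ₁)] = p/q̂. -/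
open MeasureTheory Set

/-- Proposition 2: if g is a nondecreasing enactment probability with g(0) = 0
and g ≡ 1 above q̂, and (ξ₁, ξ₂) is a martingale with ξ₁ ~ μ̂ (mass p/q̂ on q̂,
rest on 0) and ξ₂ ~ μ (supported on [0,1]), then E[g(ξ₂)] ≤ E[g(ξ₁)] = p/q̂. -/
theorem stmt13 (p qhat : ℝ) (hp : p ∈ Set.Ioo (0:ℝ) 1) (hq : qhat ∈ Set.Ioc p 1)
    (μhat : Measure ℝ)
    (hμhat : μhat = ENNReal.ofReal (p / qhat) • Measure.dirac qhat
                  + ENNReal.ofReal (1 - p / qhat) • Measure.dirac 0)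
    (μ : Measure ℝ) [IsProbabilityMeasure μ]
    (hsupp : μ (Set.Icc (0:ℝ) 1)ᶜ = 0)
    (g : ℝ → ℝ) (hmono : Monotone g) (hg0 : g 0 = 0)
    (hg1 : ∀ r, qhat ≤ r → g r = 1) (hgrange : ∀ r, g r ∈ Set.Icc (0:ℝ) 1)
    (Ω : Type) (mΩ : MeasurableSpace Ω) (ℙ : Measure Ω) [IsProbabilityMeasure ℙ]
    (ξ₁ ξ₂ : Ω → ℝ) (hm₁ : Measurable ξ₁) (hm₂ : Measurable ξ₂)
    (hd₁ : ℙ.map ξ₁ = μhat) (hd₂ : ℙ.map ξ₂ = μ)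
    (hmart : ℙ[ξ₂ | MeasurableSpace.comap ξ₁ inferInstance] =ᵐ[ℙ] ξ₁)
    (hint₁ : Integrable (fun ω => g (ξ₁ ω)) ℙ)
    (hint₂ : Integrable (fun ω => g (ξ₂ ω)) ℙ) :
    (∫ ω, g (ξ₂ ω) ∂ℙ ≤ ∫ ω, g (ξ₁ ω) ∂ℙ) ∧ (∫ ω, g (ξ₁ ω) ∂ℙ = p / qhat) := by
  obtain ⟨hp0, hp1⟩ := hp
  obtain ⟨hpq, hq1⟩ := hq
  have hq0 : 0 < qhat := lt_trans hp0 hpq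
  have hpq0 : 0 ≤ p / qhat := le_of_lt (div_pos hp0 hq0)
  have hpq1 : p / qhat ≤ 1 := by
    rw [div_le_one hq0]; exact le_of_lt hpq
  have hgmeas : Measurable g := hmono.measurable
  -- value of E[g(ξ₁)]
  have hEg1 : ∫ ω, g (ξ₁ ω) ∂ℙ = p / qhat := by
    have h1 : ∫ ω, g (ξ₁ ω) ∂ℙ = ∫ x, g x ∂μhat := by
      rw [← hd₁, integral_map hm₁.aemeasurable hgmeas.aestronglyMeasurable]
    rw [h1, hμhat]
    have hdint : ∀ a : ℝ, Integrable g (Measure.dirac a) := fun a =>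
      (integrable_const (g a)).congr (ae_eq_dirac g).symm
    rw [integral_add_measure ((hdint qhat).smul_measure ENNReal.ofReal_ne_top)
        ((hdint 0).smul_measure ENNReal.ofReal_ne_top)]
    rw [integral_smul_measure, integral_smul_measure, integral_dirac, integral_dirac]
    rw [hg0, hg1 qhat le_rfl]
    rw [ENNReal.toReal_ofReal hpq0]
    simp
  refine ⟨?_, hEg1⟩
  -- ξ₂ ∈ [0,1] a.e.
  have hξ₂mem : ∀ᵐ ω ∂ℙ, ξ₂ ω ∈ Set.Icc (0:ℝ) 1 := by
    have : ℙ (ξ₂ ⁻¹' (Set.Icc (0:ℝ) 1)ᶜ) = 0 := by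
      rw [← Measure.map_apply hm₂ measurableSet_Icc.compl, hd₂]; exact hsupp
    rw [ae_iff]; exact this
  have hξ₂nn : 0 ≤ᵐ[ℙ] ξ₂ := hξ₂mem.mono fun ω h => h.1
  have hintξ₂ : Integrable ξ₂ ℙ := by
    refine Integrable.mono' (integrable_const (1:ℝ)) hm₂.aestronglyMeasurable ?_
    filter_upwards [hξ₂mem] with ω h
    rw [Real.norm_eq_abs, abs_of_nonneg h.1]; exact h.2
  -- the set A = {ξ₁ = 0}
  set A : Set Ω := ξ₁ ⁻¹' {0} with hA
  have hAmeas : MeasurableSet A := hm₁ (measurableSet_singleton 0)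
  have hAm : MeasurableSet[MeasurableSpace.comap ξ₁ inferInstance] A :=
    ⟨{0}, measurableSet_singleton 0, rfl⟩
  have hle : MeasurableSpace.comap ξ₁ inferInstance ≤ mΩ := hm₁.comap_le
  -- ∫_A ξ₂ = 0
  have hintA : ∫ ω in A, ξ₂ ω ∂ℙ = 0 := by
    have h1 : ∫ ω in A, ξ₂ ω ∂ℙ = ∫ ω in A, (ℙ[ξ₂ | MeasurableSpace.comap ξ₁ inferInstance]) ω ∂ℙ :=
      (setIntegral_condExp hle hintξ₂ hAm).symm
    have h2 : ∫ ω in A, (ℙ[ξ₂ | MeasurableSpace.comap ξ₁ inferInstance]) ω ∂ℙ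
        = ∫ ω in A, ξ₁ ω ∂ℙ :=
      integral_congr_ae (ae_restrict_of_ae hmart)
    have h3 : ∫ ω in A, ξ₁ ω ∂ℙ = 0 := by
      rw [setIntegral_congr_fun hAmeas (g := fun _ => (0:ℝ)) (fun ω hω => hω)]
      simp
    rw [h1, h2, h3]
  -- ξ₂ = 0 a.e. on A
  have hzero : ∀ᵐ ω ∂ℙ, ω ∈ A → ξ₂ ω = 0 := by
    have := (integral_eq_zero_iff_of_nonneg_ae (ae_restrict_of_ae hξ₂nn)
        (hintξ₂.restrict (s := A))).mp hintA
    have := (ae_restrict_iff' hAmeas).mp this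
    filter_upwards [this] with ω h hω using h hω
  -- pointwise bound by indicator of Aᶜ
  have hbound : ∀ᵐ ω ∂ℙ, g (ξ₂ ω) ≤ Aᶜ.indicator (fun _ => (1:ℝ)) ω := by
    filter_upwards [hzero] with ω h
    by_cases hω : ω ∈ A
    · rw [Set.indicator_of_notMem (by simpa using hω), h hω, hg0]
    · rw [Set.indicator_of_mem (by simpa using hω)]
      exact (hgrange _).2
  have hindint : Integrable (Aᶜ.indicator (fun _ => (1:ℝ))) ℙ :=
    (integrable_const (1:ℝ)).indicator hAmeas.compl
  have h4 : ∫ ω, g (ξ₂ ω) ∂ℙ ≤ ∫ ω, Aᶜ.indicator (fun _ => (1:ℝ)) ω ∂ℙ :=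
    integral_mono_ae hint₂ hindint hbound
  have h5 : ∫ ω, Aᶜ.indicator (fun _ => (1:ℝ)) ω ∂ℙ = (ℙ Aᶜ).toReal := by
    rw [integral_indicator_const (1:ℝ) hAmeas.compl]; simp [measureReal_def]
  have h6 : ℙ Aᶜ = ENNReal.ofReal (p / qhat) := by
    have : Aᶜ = ξ₁ ⁻¹' ({0}ᶜ) := rfl
    rw [this, ← Measure.map_apply hm₁ (measurableSet_singleton 0).compl, hd₁, hμhat]
    have hq0' : qhat ≠ 0 := ne_of_gt hq0
    simp [Measure.dirac_apply' _ (measurableSet_singleton (0:ℝ)).compl,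
      Set.indicator_apply, hq0']
  rw [hEg1]
  calc ∫ ω, g (ξ₂ ω) ∂ℙ ≤ (ℙ Aᶜ).toReal := h4.trans_eq h5
    _ = p / qhat := by rw [h6, ENNReal.toReal_ofReal hpq0]
end
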